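/- Let φ be an entire function on ℂ of order 2 and let α ∈ (0, π/2). Suppose |φ(z)| ≤ C(1+|z|)^N on the boundary rays of the angular sector {r e^{iβ} : r ≥ 0, β₀ ≤ β ≤ β₀ + α}. Then |φ(z)| ≤ 2^N C (1+|z|)^N for all z inside the sector. -/

import Mathlib

/-!
Divide `φ` by `w(z)^N`, where `w(z) = 1 + e^{-iγ} z` and `γ` is the bisecting direction of the
sector. Every point of the sector makes an angle less than `π/4` with the bisector, so
`(1 + |z|)/2 ≤ |w(z)| ≤ 1 + |z|` there; hence `φ / w^N` is holomorphic near the sector, bounded by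
`2^N C` on its rays and still of order `2`. Through `z = e^ζ` the sector becomes a horizontal strip
of width `α`, on which an order-`2` function grows at most like `exp (B e^{2 |Re ζ|})` with
`2 < π / α`: the Phragmén–Lindelöf principle for strips bounds `φ / w^N` by `2^N C` inside, and
multiplying back by `|w|^N ≤ (1 + |z|)^N` gives the claim.
-/

open Real Complex Set Filter

namespace Complex

theorem exp_eq_exp_re_mul_exp_I_mul_im (w : ℂ) :
    exp w = (Real.exp w.re : ℂ) * exp (I * w.im) := by
  conv_lhs => rw [← re_add_im w]
  rw [Complex.exp_add, ofReal_exp, mul_comm I]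

theorem exp_log_add_mul_I {r : ℝ} (hr : 0 < r) (β : ℝ) :
    exp (Real.log r + β * I) = r * exp (I * β) := by
  rw [Complex.exp_add, ← ofReal_exp, Real.exp_log hr, mul_comm I]

theorem mul_cos_le_norm_one_add_mul_exp (r θ : ℝ) :
    (1 + r) * Real.cos θ ≤ ‖1 + r * exp (θ * I)‖ :=
  calc (1 + r) * Real.cos θ ≤ 1 + r * Real.cos θ := by nlinarith [Real.cos_le_one θ]
    _ = (1 + r * exp (θ * I)).re := by simp [exp_ofReal_mul_I_re]
    _ ≤ ‖1 + r * exp (θ * I)‖ := re_le_norm _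

theorem norm_one_add_mul_exp_le {r : ℝ} (hr : 0 ≤ r) (θ : ℝ) :
    ‖1 + r * exp (θ * I)‖ ≤ 1 + r :=
  (norm_add_le _ _).trans_eq <| by simp [norm_exp_ofReal_mul_I, abs_of_nonneg hr]

theorem norm_div_pow_le_two_pow_mul {u v : ℂ} {x K : ℝ} {N : ℕ} (hx : 0 < x)
    (hv : x / 2 ≤ ‖v‖) (hu : ‖u‖ ≤ K * x ^ N) : ‖u / v ^ N‖ ≤ 2 ^ N * K := by
  have hK : 0 ≤ K := nonneg_of_mul_nonneg_left ((norm_nonneg u).trans hu) (pow_pos hx N)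
  have hv₀ : 0 < ‖v‖ := by linarith
  rw [norm_div, norm_pow, div_le_iff₀ (pow_pos hv₀ N)]
  calc ‖u‖ ≤ K * x ^ N := hu
    _ = 2 ^ N * K * (x / 2) ^ N := by rw [div_pow]; field_simp
    _ ≤ 2 ^ N * K * ‖v‖ ^ N := by gcongr

theorem norm_le_mul_pow_of_norm_div_pow_le {u v : ℂ} {x K : ℝ} {N : ℕ} (hv : v ≠ 0)
    (hvx : ‖v‖ ≤ x) (h : ‖u / v ^ N‖ ≤ K) : ‖u‖ ≤ K * x ^ N :=
  calc ‖u‖ = ‖u / v ^ N‖ * ‖v‖ ^ N := by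
        rw [norm_div, norm_pow, div_mul_cancel₀ _ (pow_ne_zero N (norm_ne_zero_iff.2 hv))]
    _ ≤ K * x ^ N :=
        mul_le_mul h (pow_le_pow_left₀ (norm_nonneg v) hvx N) (by positivity)
          ((norm_nonneg _).trans h)

end Complex

theorem Real.half_le_cos_of_abs_le {θ : ℝ} (hθ : |θ| ≤ π / 3) : 1 / 2 ≤ Real.cos θ := by
  rw [← Real.cos_abs, ← Real.cos_pi_div_three]
  exact Real.cos_le_cos_of_nonneg_of_le_pi (abs_nonneg θ) (by linarith [pi_pos]) hθ

namespace PhragmenLindelof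

variable {E : Type*} [NormedAddCommGroup E] [NormedSpace ℂ E]

theorem sector {g : ℂ → E} {a b ρ A B M : ℝ} (hρ₀ : 0 ≤ ρ) (hρ : ρ < π / (b - a))
    (hd : ∀ r : ℝ, 0 < r → ∀ β ∈ Icc a b, DifferentiableAt ℂ g (r * exp (I * β)))
    (hgrowth : ∀ r : ℝ, 0 < r → ∀ β ∈ Icc a b,
      ‖g (r * exp (I * β))‖ ≤ A * Real.exp (B * r ^ ρ))
    (ha : ∀ r : ℝ, 0 ≤ r → ‖g (r * exp (I * a))‖ ≤ M)
    (hb : ∀ r : ℝ, 0 ≤ r → ‖g (r * exp (I * b))‖ ≤ M)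
    {r β : ℝ} (hr : 0 ≤ r) (hβ : β ∈ Icc a b) : ‖g (r * exp (I * β))‖ ≤ M := by
  rcases hr.eq_or_lt with rfl | hr
  · simpa using ha 0 le_rfl
  have hstrip {w : ℂ} (hw : w.im ∈ Icc a b) : ‖g (exp w)‖ ≤ M := by
    refine horizontal_strip (f := g ∘ exp) ?_ ⟨ρ, hρ, |B|, ?_⟩ ?_ ?_ hw.1 hw.2
    · refine DifferentiableOn.diffContOnCl fun w hw => ?_
      rw [closure_preimage_im] at hw
      have hw' := isClosed_Icc.closure_subset_iff.2 Ioo_subset_Icc_self hw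
      have hgw := hd _ (Real.exp_pos w.re) _ hw'
      rw [← exp_eq_exp_re_mul_exp_I_mul_im] at hgw
      exact (hgw.comp w differentiableAt_exp).differentiableWithinAt
    · refine Asymptotics.IsBigO.of_bound |A|
        (eventually_inf_principal.2 (.of_forall fun w hw => ?_))
      have hw' : w.im ∈ Icc a b := Ioo_subset_Icc_self hw
      have hpow : Real.exp w.re ^ ρ ≤ Real.exp (ρ * |w.re|) := by
        rw [← Real.exp_mul, Real.exp_le_exp, mul_comm]
        exact mul_le_mul_of_nonneg_left (le_abs_self _) hρ₀
      calc ‖(g ∘ exp) w‖ ≤ A * Real.exp (B * Real.exp w.re ^ ρ) := by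
            rw [Function.comp_apply, exp_eq_exp_re_mul_exp_I_mul_im]
            exact hgrowth _ (Real.exp_pos w.re) _ hw'
        _ ≤ |A| * Real.exp (|B| * Real.exp (ρ * |w.re|)) := by
            gcongr ?_ * Real.exp ?_
            · exact le_abs_self A
            · exact (mul_le_mul_of_nonneg_left hpow (abs_nonneg B)).trans'
                (mul_le_mul_of_nonneg_right (le_abs_self B) (by positivity))
        _ = |A| * ‖Real.exp (|B| * Real.exp (ρ * |w.re|))‖ := by
            rw [Real.norm_of_nonneg (Real.exp_pos _).le]
    · intro w hw
      simpa [exp_eq_exp_re_mul_exp_I_mul_im w, hw] using ha _ (Real.exp_pos _).le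
    · intro w hw
      simpa [exp_eq_exp_re_mul_exp_I_mul_im w, hw] using hb _ (Real.exp_pos _).le
  simpa [exp_log_add_mul_I hr] using hstrip (w := Real.log r + β * I) (by simpa using hβ)

end PhragmenLindelof

noncomputable def sectorWeight (γ : ℝ) (z : ℂ) : ℂ := 1 + exp (-(I * γ)) * z

theorem differentiable_sectorWeight (γ : ℝ) : Differentiable ℂ (sectorWeight γ) := by
  unfold sectorWeight
  fun_prop

theorem sectorWeight_ofReal_mul_exp (γ r β : ℝ) :
    sectorWeight γ (r * exp (I * β)) = 1 + r * exp ((β - γ : ℝ) * I) := by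
  rw [sectorWeight, mul_left_comm, ← Complex.exp_add]
  push_cast
  ring_nf

theorem norm_sectorWeight_le {r : ℝ} (hr : 0 ≤ r) (γ β : ℝ) :
    ‖sectorWeight γ (r * exp (I * β))‖ ≤ 1 + r := by
  rw [sectorWeight_ofReal_mul_exp]
  exact norm_one_add_mul_exp_le hr _

theorem half_le_norm_sectorWeight {r γ β : ℝ} (hr : 0 ≤ r) (hβ : |β - γ| ≤ π / 3) :
    (1 + r) / 2 ≤ ‖sectorWeight γ (r * exp (I * β))‖ := by
  rw [sectorWeight_ofReal_mul_exp]
  calc (1 + r) / 2 = (1 + r) * (1 / 2) := by ring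
    _ ≤ (1 + r) * Real.cos (β - γ) := by gcongr; exact Real.half_le_cos_of_abs_le hβ
    _ ≤ _ := mul_cos_le_norm_one_add_mul_exp r _

theorem sectorWeight_ne_zero {r γ β : ℝ} (hr : 0 ≤ r) (hβ : |β - γ| ≤ π / 3) :
    sectorWeight γ (r * exp (I * β)) ≠ 0 :=
  norm_pos_iff.1 (by linarith [half_le_norm_sectorWeight hr hβ])

theorem phragmen_lindelof_sector_general (φ : ℂ → ℂ) (hφ : Differentiable ℂ φ)
    (horder : ∃ C' > (0 : ℝ), ∀ z : ℂ, ‖φ z‖ ≤ C' * Real.exp (C' * ‖z‖ ^ 2))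
    (N : ℕ) (C : ℝ) (β₀ α : ℝ) (hα : α ∈ Set.Ioo 0 (π / 2))
    (hbd : ∀ r : ℝ, 0 ≤ r →
      ‖φ ((r : ℂ) * Complex.exp (Complex.I * β₀))‖ ≤ C * (1 + r) ^ N ∧
      ‖φ ((r : ℂ) * Complex.exp (Complex.I * (β₀ + α)))‖ ≤ C * (1 + r) ^ N) :
    ∀ r : ℝ, 0 ≤ r → ∀ β : ℝ, β₀ ≤ β → β ≤ β₀ + α →
      ‖φ ((r : ℂ) * Complex.exp (Complex.I * β))‖ ≤ 2 ^ N * C * (1 + r) ^ N := by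
  obtain ⟨C', -, hC'⟩ := horder
  intro r hr β hβ₀ hβ₁
  set γ := β₀ + α / 2 with hγ_def
  have hγ {β : ℝ} (hβ : β ∈ Icc β₀ (β₀ + α)) : |β - γ| ≤ π / 3 :=
    abs_le.2 ⟨by linarith [hβ.1, hα.2, pi_pos], by linarith [hβ.2, hα.2, pi_pos]⟩
  have hray {r β : ℝ} (hr : 0 ≤ r) (hβ : β ∈ Icc β₀ (β₀ + α))
      (hφr : ‖φ (r * exp (I * β))‖ ≤ C * (1 + r) ^ N) :
      ‖φ (r * exp (I * β)) / sectorWeight γ (r * exp (I * β)) ^ N‖ ≤ 2 ^ N * C :=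
    norm_div_pow_le_two_pow_mul (by linarith) (half_le_norm_sectorWeight hr (hγ hβ)) hφr
  have hquotient := PhragmenLindelof.sector (g := fun z ↦ φ z / sectorWeight γ z ^ N)
    (ρ := 2) (A := 2 ^ N * C') (B := C') zero_le_two
    (by rw [add_sub_cancel_left, lt_div_iff₀ hα.1]; linarith [hα.2])
    (fun r hr β hβ ↦ (hφ _).div ((differentiable_sectorWeight γ _).pow N)
      (pow_ne_zero N (sectorWeight_ne_zero hr.le (hγ hβ))))
    (fun r hr β hβ ↦ by
      rw [mul_assoc]
      exact norm_div_pow_le_two_pow_mul one_pos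
        (by linarith [half_le_norm_sectorWeight hr.le (hγ hβ)])
        (by simpa [abs_of_pos hr] using hC' (r * exp (I * β))))
    (fun r hr ↦ hray hr ⟨le_rfl, by linarith [hα.1]⟩ (hbd r hr).1)
    (fun r hr ↦ hray hr ⟨by linarith [hα.1], le_rfl⟩ (by exact_mod_cast (hbd r hr).2))
    hr ⟨hβ₀, hβ₁⟩
  exact norm_le_mul_pow_of_norm_div_pow_le (sectorWeight_ne_zero hr (hγ ⟨hβ₀, hβ₁⟩))
    (norm_sectorWeight_le hr _ _) hquotient

/-- Phragmén–Lindelöf for an entire function of order 2 on an angular sector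
of opening α < π/2 : a polynomial bound on the boundary rays propagates to the
interior of the sector (with constant `2^N C`). -/
theorem phragmen_lindelof_sector (φ : ℂ → ℂ) (hφ : Differentiable ℂ φ)
    (horder : ∃ C' > (0 : ℝ), ∀ z : ℂ, ‖φ z‖ ≤ C' * Real.exp (C' * ‖z‖ ^ 2))
    (N : ℕ) (C : ℝ) (hC : 0 < C) (β₀ α : ℝ) (hα : α ∈ Set.Ioo 0 (π / 2))
    (hbd : ∀ r : ℝ, 0 ≤ r →
      ‖φ ((r : ℂ) * Complex.exp (Complex.I * β₀))‖ ≤ C * (1 + r) ^ N ∧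
      ‖φ ((r : ℂ) * Complex.exp (Complex.I * (β₀ + α)))‖ ≤ C * (1 + r) ^ N) :
    ∀ r : ℝ, 0 ≤ r → ∀ β : ℝ, β₀ ≤ β → β ≤ β₀ + α →
      ‖φ ((r : ℂ) * Complex.exp (Complex.I * β))‖ ≤ 2 ^ N * C * (1 + r) ^ N :=
  phragmen_lindelof_sector_general φ hφ horder N C β₀ α hα hbd
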